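/- arXiv:2009.03731 — 2 statements merged into one kernel-verified Lean document; each statement's English description precedes it below -/
import Mathlib

section
/- Let x ∈ [1,∞)⁶ and i ∈ {2,3,5,6}. If ∂φ/∂xᵢ(x) ≤ 0, then for all t, s ≤ 0 such that x + t·mᵢ + s·m_{î} ∈ [1,∞)⁶ one has ∂φ/∂xᵢ(x + t·mᵢ + s·m_{î}) ≤ 0. In particular, φ(x) ≤ φ(y) for every y with 1 ≤ yᵢ ≤ xᵢ and y_j = x_j for all j ≠ i. -/
open Real

/-- The cosine of the dihedral angle at the edge `e₁` of a generalized hyper-ideal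
tetrahedron whose edge lengths `lᵢ` satisfy `cosh lᵢ = xᵢ`. -/
noncomputable def phi (x1 x2 x3 x4 x5 x6 : ℝ) : ℝ :=
  (x2 * x3 + x5 * x6 + x1 * x2 * x5 + x1 * x3 * x6 - x1 ^ 2 * x4 + x4) /
    (Real.sqrt (2 * x1 * x2 * x6 + x1 ^ 2 + x2 ^ 2 + x6 ^ 2 - 1) *
      Real.sqrt (2 * x1 * x3 * x5 + x1 ^ 2 + x3 ^ 2 + x5 ^ 2 - 1))

/-- `phi` as a function of a vector `x : Fin 6 → ℝ`, where `x ⟨k-1⟩` plays the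
role of the coordinate `x_k`, `k = 1, …, 6`. -/
noncomputable def phiV (x : Fin 6 → ℝ) : ℝ :=
  phi (x 0) (x 1) (x 2) (x 3) (x 4) (x 5)

/-- The partial derivative `∂φ/∂x_{i+1}` of `phiV` in the `i`-th coordinate at `x`. -/
noncomputable def pphi (i : Fin 6) (x : Fin 6 → ℝ) : ℝ :=
  deriv (fun u => phiV (Function.update x i u)) (x i)

/-- The pairing `2̂ = 5, 3̂ = 6, 5̂ = 2, 6̂ = 3` of the indices `{2,3,5,6}`; in the
`0`-based indexing of `Fin 6` the pairs are `(1,4), (2,5), (4,1), (5,2)`. -/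
def IsPairedIndex (i ih : Fin 6) : Prop :=
  (i = 1 ∧ ih = 4) ∨ (i = 2 ∧ ih = 5) ∨ (i = 4 ∧ ih = 1) ∨ (i = 5 ∧ ih = 2)

/-!
In the coordinates `(a, b, c, d, e, f) = (x₁, …, x₆)` one computes
`∂φ/∂x₂ = (a² - 1) N / (A^{3/2} B^{1/2})` with `A`, `B` the two radicands and
`N = (b + a f)(d + e f) - (c + a e)(f² - 1)`. Since `∂N/∂b = d + e f ≥ 0` and
`∂N/∂e = b f + a ≥ 0`, the sign condition `N ≤ 0` survives decreasing `b` and `e`, and then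
`φ` is antitone in `b` below the starting point. The symmetries of `φ` permuting `(b, c, e, f)`
carry the indices `3, 5, 6` (with their partners) to the case of index `2`.
-/

def phiDerivSndNum (a b c d e f : ℝ) : ℝ :=
  (a ^ 2 - 1) * ((b + a * f) * (d + e * f) - (c + a * e) * (f ^ 2 - 1))

noncomputable def phiDerivSnd (a b c d e f : ℝ) : ℝ :=
  phiDerivSndNum a b c d e f /
    ((2 * a * b * f + a ^ 2 + b ^ 2 + f ^ 2 - 1) * √(2 * a * b * f + a ^ 2 + b ^ 2 + f ^ 2 - 1) *
      √(2 * a * c * e + a ^ 2 + c ^ 2 + e ^ 2 - 1))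

lemma phi_radicand_pos {a b f : ℝ} (ha : 1 ≤ a) (hb : 1 ≤ b) (hf : 1 ≤ f) :
    0 < 2 * a * b * f + a ^ 2 + b ^ 2 + f ^ 2 - 1 := by
  have : 1 ≤ a * b * f := one_le_mul_of_one_le_of_one_le (one_le_mul_of_one_le_of_one_le ha hb) hf
  nlinarith

lemma hasDerivAt_phi_snd {a b c d e f : ℝ}
    (hA : 0 < 2 * a * b * f + a ^ 2 + b ^ 2 + f ^ 2 - 1)
    (hB : 0 < 2 * a * c * e + a ^ 2 + c ^ 2 + e ^ 2 - 1) :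
    HasDerivAt (fun u => phi a u c d e f) (phiDerivSnd a b c d e f) b := by
  have hnum : HasDerivAt (fun u => u * c + e * f + a * u * e + a * c * f - a ^ 2 * d + d)
      (c + a * e) b :=
    (((((hasDerivAt_id' b).mul_const c).add_const (e * f)).add
      (((hasDerivAt_id' b).const_mul a).mul_const e)).add_const (a * c * f) |>.sub_const
      (a ^ 2 * d) |>.add_const d).congr_deriv (by ring)
  have hrad : HasDerivAt (fun u => 2 * a * u * f + a ^ 2 + u ^ 2 + f ^ 2 - 1)
      (2 * a * f + 2 * b) b :=
    (((((hasDerivAt_id' b).const_mul (2 * a)).mul_const f).add_const (a ^ 2)).add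
      (hasDerivAt_pow 2 b) |>.add_const (f ^ 2) |>.sub_const 1).congr_deriv (by ring)
  have hden := (hrad.sqrt hA.ne').mul_const √(2 * a * c * e + a ^ 2 + c ^ 2 + e ^ 2 - 1)
  refine (hnum.div hden (by positivity)).congr_deriv ?_
  have hsA := Real.sq_sqrt hA.le
  have hsA_pos := Real.sqrt_pos.2 hA
  have hsB_pos := Real.sqrt_pos.2 hB
  simp only [phiDerivSnd, phiDerivSndNum]
  generalize √(2 * a * b * f + a ^ 2 + b ^ 2 + f ^ 2 - 1) = s at *
  generalize √(2 * a * c * e + a ^ 2 + c ^ 2 + e ^ 2 - 1) = t at *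
  rw [← hsA]
  field_simp
  linear_combination (c + a * e) * hsA

lemma phiDerivSnd_nonpos_iff {a b c d e f : ℝ} (ha : 1 ≤ a) (hb : 1 ≤ b) (hc : 1 ≤ c)
    (he : 1 ≤ e) (hf : 1 ≤ f) :
    phiDerivSnd a b c d e f ≤ 0 ↔ phiDerivSndNum a b c d e f ≤ 0 := by
  have hA := phi_radicand_pos ha hb hf
  have hB := phi_radicand_pos ha hc he
  rw [phiDerivSnd, div_le_iff₀ (by positivity), zero_mul]

lemma phiDerivSndNum_le {a b b' c d e e' f : ℝ} (ha : 1 ≤ a) (hb' : 0 ≤ b') (hbb' : b' ≤ b)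
    (hd : 0 ≤ d) (he' : 0 ≤ e') (hee' : e' ≤ e) (hf : 0 ≤ f) :
    phiDerivSndNum a b' c d e' f ≤ phiDerivSndNum a b c d e f := by
  have ha2 : 0 ≤ a ^ 2 - 1 := by nlinarith
  refine mul_le_mul_of_nonneg_left ?_ ha2
  -- the increment is `(b - b') (d + e f) + (e - e') (b' f + a)`
  have ha0 : 0 ≤ a := by linarith
  nlinarith [mul_nonneg (sub_nonneg.2 hbb') (add_nonneg hd (mul_nonneg (he'.trans hee') hf)),
    mul_nonneg (sub_nonneg.2 hee') (add_nonneg (mul_nonneg hb' hf) ha0)]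

lemma phiDerivSnd_nonpos_of_le {a b b' c d e e' f : ℝ} (ha : 1 ≤ a) (hb' : 1 ≤ b')
    (hbb' : b' ≤ b) (hc : 1 ≤ c) (hd : 0 ≤ d) (he' : 1 ≤ e') (hee' : e' ≤ e)
    (hf : 1 ≤ f) (h : phiDerivSnd a b c d e f ≤ 0) : phiDerivSnd a b' c d e' f ≤ 0 := by
  rw [phiDerivSnd_nonpos_iff ha (hb'.trans hbb') hc (he'.trans hee') hf] at h
  rw [phiDerivSnd_nonpos_iff ha hb' hc he' hf]
  exact (phiDerivSndNum_le ha (by linarith) hbb' hd (by linarith) hee' (by linarith)).trans h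

lemma antitoneOn_phi_snd {a b c d e f : ℝ} (ha : 1 ≤ a) (hc : 1 ≤ c) (hd : 0 ≤ d)
    (he : 1 ≤ e) (hf : 1 ≤ f) (h : phiDerivSnd a b c d e f ≤ 0) :
    AntitoneOn (fun u => phi a u c d e f) (Set.Icc 1 b) := by
  have hderiv : ∀ u, 1 ≤ u →
      HasDerivAt (fun u => phi a u c d e f) (phiDerivSnd a u c d e f) u :=
    fun u hu => hasDerivAt_phi_snd (phi_radicand_pos ha hu hf) (phi_radicand_pos ha hc he)
  refine antitoneOn_of_hasDerivWithinAt_nonpos (convex_Icc 1 b)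
    (fun u hu => (hderiv u hu.1).continuousAt.continuousWithinAt)
    (fun u hu => (hderiv u ?_).hasDerivWithinAt) (fun u hu => ?_)
  all_goals rw [interior_Icc] at hu
  · exact hu.1.le
  · exact phiDerivSnd_nonpos_of_le ha hu.1.le hu.2.le hc hd he le_rfl hf h

lemma phi_swap_left_right (a b c d e f : ℝ) : phi a b c d e f = phi a c b d f e := by
  unfold phi; ring_nf

lemma phi_swap_top_bottom (a b c d e f : ℝ) : phi a b c d e f = phi a e f d b c := by
  unfold phi; ring_nf

namespace IsPairedIndex

variable {i ih : Fin 6}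

lemma ne (h : IsPairedIndex i ih) : i ≠ ih := by
  rcases h with ⟨rfl, rfl⟩ | ⟨rfl, rfl⟩ | ⟨rfl, rfl⟩ | ⟨rfl, rfl⟩ <;> decide

lemma exists_phiV_eq (h : IsPairedIndex i ih) :
    ∃ k l : Fin 6, ∀ x z : Fin 6 → ℝ, (∀ j, j ≠ i → j ≠ ih → z j = x j) →
      phiV z = phi (x 0) (z i) (x k) (x 3) (z ih) (x l) := by
  rcases h with ⟨rfl, rfl⟩ | ⟨rfl, rfl⟩ | ⟨rfl, rfl⟩ | ⟨rfl, rfl⟩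
  · exact ⟨2, 5, fun x z hz => by simp [phiV, hz]⟩
  · exact ⟨1, 4, fun x z hz => by rw [phiV, phi_swap_left_right]; simp [hz]⟩
  · exact ⟨5, 2, fun x z hz => by rw [phiV, phi_swap_top_bottom]; simp [hz]⟩
  · exact ⟨4, 1, fun x z hz => by
      rw [phiV, phi_swap_left_right, phi_swap_top_bottom]; simp [hz]⟩

end IsPairedIndex

lemma pphi_eq_deriv_of_phiV_eq {i ih : Fin 6} (hne : i ≠ ih) {g : ℝ → ℝ → ℝ}
    {x z : Fin 6 → ℝ}
    (hg : ∀ w, (∀ j, j ≠ i → j ≠ ih → w j = x j) → phiV w = g (w i) (w ih))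
    (hz : ∀ j, j ≠ i → j ≠ ih → z j = x j) :
    pphi i z = deriv (fun u => g u (z ih)) (z i) := by
  refine congrArg (deriv · (z i)) (funext fun u => ?_)
  rw [hg _ fun j hji hjih => by rw [Function.update_of_ne hji, hz j hji hjih],
    Function.update_self, Function.update_of_ne hne.symm]

theorem phi_partial_nonpos_propagates (x : Fin 6 → ℝ) (hx : ∀ j, 1 ≤ x j)
    (i ih : Fin 6) (hpair : IsPairedIndex i ih) (hd : pphi i x ≤ 0) :
    (∀ t s : ℝ, t ≤ 0 → s ≤ 0 →
        (∀ j, 1 ≤ (x + t • (Pi.single i 1 : Fin 6 → ℝ) + s • (Pi.single ih 1 : Fin 6 → ℝ)) j) →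
        pphi i (x + t • (Pi.single i 1 : Fin 6 → ℝ) + s • (Pi.single ih 1 : Fin 6 → ℝ)) ≤ 0) ∧
      (∀ y : Fin 6 → ℝ, 1 ≤ y i → y i ≤ x i → (∀ j, j ≠ i → y j = x j) →
        phiV x ≤ phiV y) := by
  obtain ⟨k, l, hslice⟩ := hpair.exists_phiV_eq
  have hne := hpair.ne
  have hpphi := fun z => pphi_eq_deriv_of_phiV_eq (z := z)
    (g := fun u v => phi (x 0) u (x k) (x 3) v (x l)) hne (hslice x)
  have hder : ∀ {u v}, 1 ≤ u → 1 ≤ v →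
      deriv (fun u => phi (x 0) u (x k) (x 3) v (x l)) u =
        phiDerivSnd (x 0) u (x k) (x 3) v (x l) :=
    fun hu hv => (hasDerivAt_phi_snd (phi_radicand_pos (hx 0) hu (hx l))
      (phi_radicand_pos (hx 0) (hx k) hv)).deriv
  rw [hpphi x fun _ _ _ => rfl, hder (hx i) (hx ih)] at hd
  refine ⟨fun t s ht hs hz => ?_, fun y hy1 hyx hy => ?_⟩
  · set z := x + t • (Pi.single i 1 : Fin 6 → ℝ) + s • (Pi.single ih 1 : Fin 6 → ℝ)
    have hzi : z i = x i + t := by simp [z, hne]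
    have hzih : z ih = x ih + s := by simp [z, hne.symm]
    rw [hpphi z fun j hji hjih => by simp [z, hji, hjih], hder (hz i) (hz ih)]
    exact phiDerivSnd_nonpos_of_le (hx 0) (hz i) (by linarith) (hx k) (by linarith [hx 3])
      (hz ih) (by linarith) (hx l) hd
  · rw [hslice x x fun _ _ _ => rfl, hslice x y fun j hji _ => hy j hji, hy ih hne.symm]
    exact antitoneOn_phi_snd (hx 0) (hx k) (by linarith [hx 3]) (hx ih) (hx l) hd
      ⟨hy1, hyx⟩ ⟨hy1.trans hyx, le_rfl⟩ hyx
end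

section
/- Let x ∈ [1,∞)⁶ satisfy x₁ = max{x₁,...,x₆} and x₁ > 1. Then φ(x) ≤ max { φ(x₁, x₁, x₁, 1, x₁, x₁), φ(x₁, x₁, 1, 1, x₁, 1), φ(x₁, x₁, x₁, 1, x₁, 1) }. -/
open Real

/-!
`φ` is antitone in `x₄` (its coefficient in the numerator is `1 - x₁²`), so we may take `x₄ = 1`.
As a function of `x₂` alone, `φ` is a positive multiple of `(a t + b) / √(t² + 2 c t + d)` with
`b ≤ a c`; the derivative of such a quotient has the sign of the nondecreasing affine function
`(a c - b) t + (a d - b c)`, so on an interval it is maximal at an endpoint. The symmetries of the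
tetrahedron fixing `e₁` carry `x₂` to `x₃`, `x₅` and `x₆`, so `φ` is bounded by its values at the
vertices of `[1, x₁]⁴`. Up to these symmetries there are seven vertices: three give the bound
itself and the other four are compared with them by explicit polynomial inequalities.
-/

open Set

theorem le_max_of_hasDerivAt_of_sign_change {f f' : ℝ → ℝ} {p q t : ℝ}
    (hf : ∀ s ∈ Icc p q, HasDerivAt f (f' s) s)
    (hf' : ∀ s ∈ Icc p q, ∀ s' ∈ Icc p q, s ≤ s' → 0 ≤ f' s → 0 ≤ f' s')
    (ht : t ∈ Icc p q) : f t ≤ max (f p) (f q) := by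
  have hcont : ∀ a b, Icc a b ⊆ Icc p q → ContinuousOn f (Icc a b) :=
    fun _ _ hab s hs ↦ (hf s (hab hs)).continuousAt.continuousWithinAt
  have hderiv : ∀ a b, Icc a b ⊆ Icc p q → ∀ s ∈ interior (Icc a b),
      HasDerivWithinAt f (f' s) (interior (Icc a b)) s :=
    fun _ _ hab s hs ↦ (hf s (hab (interior_subset hs))).hasDerivWithinAt
  obtain ⟨hpt, htq⟩ := ht
  by_cases h : 0 ≤ f' t
  · have hsub : Icc t q ⊆ Icc p q := Icc_subset_Icc_left hpt
    have hmono : MonotoneOn f (Icc t q) :=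
      monotoneOn_of_hasDerivWithinAt_nonneg (convex_Icc t q) (hcont _ _ hsub) (hderiv _ _ hsub)
        fun s hs ↦ hf' t ⟨hpt, htq⟩ s (hsub (interior_subset hs)) (interior_subset hs).1 h
    exact (hmono (left_mem_Icc.2 htq) (right_mem_Icc.2 htq) htq).trans (le_max_right _ _)
  · have hsub : Icc p t ⊆ Icc p q := Icc_subset_Icc_right htq
    have hanti : AntitoneOn f (Icc p t) :=
      antitoneOn_of_hasDerivWithinAt_nonpos (convex_Icc p t) (hcont _ _ hsub) (hderiv _ _ hsub)
        fun s hs ↦ not_lt.1 fun hs0 ↦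
          h (hf' s (hsub (interior_subset hs)) t ⟨hpt, htq⟩ (interior_subset hs).2 hs0.le)
    exact (hanti (left_mem_Icc.2 hpt) (right_mem_Icc.2 hpt) hpt).trans (le_max_left _ _)

theorem hasDerivAt_div_sqrt_quadratic (a b c d s : ℝ) (hQ : 0 < s ^ 2 + 2 * c * s + d) :
    HasDerivAt (fun t ↦ (a * t + b) / √(t ^ 2 + 2 * c * t + d))
      (((a * c - b) * s + (a * d - b * c)) /
        ((s ^ 2 + 2 * c * s + d) * √(s ^ 2 + 2 * c * s + d))) s := by
  have hQ' : HasDerivAt (fun t ↦ t ^ 2 + 2 * c * t + d) (2 * s + 2 * c) s := by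
    refine (((hasDerivAt_pow 2 s).add ((hasDerivAt_id s).const_mul (2 * c))).add_const
      d).congr_deriv ?_
    norm_num
  have hnum : HasDerivAt (fun t ↦ a * t + b) a s := by
    simpa using ((hasDerivAt_id s).const_mul a).add_const b
  have hr := sqrt_pos.2 hQ
  refine (hnum.div (hQ'.sqrt hQ.ne') hr.ne').congr_deriv ?_
  have hsq := sq_sqrt hQ.le
  generalize √(s ^ 2 + 2 * c * s + d) = r at hr hsq ⊢
  obtain rfl : d = r ^ 2 - s ^ 2 - 2 * c * s := by linarith
  rw [show s ^ 2 + 2 * c * s + (r ^ 2 - s ^ 2 - 2 * c * s) = r ^ 2 by ring]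
  field_simp
  ring

theorem div_sqrt_quadratic_le_max {a b c d p q t : ℝ} (hb : b ≤ a * c)
    (hQ : ∀ s ∈ Icc p q, 0 < s ^ 2 + 2 * c * s + d) (ht : t ∈ Icc p q) :
    (a * t + b) / √(t ^ 2 + 2 * c * t + d) ≤
      max ((a * p + b) / √(p ^ 2 + 2 * c * p + d)) ((a * q + b) / √(q ^ 2 + 2 * c * q + d)) := by
  refine le_max_of_hasDerivAt_of_sign_change
    (fun s hs ↦ hasDerivAt_div_sqrt_quadratic a b c d s (hQ s hs)) (fun s hs s' hs' hss' h ↦ ?_) ht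
  have hden : ∀ u ∈ Icc p q, 0 < (u ^ 2 + 2 * c * u + d) * √(u ^ 2 + 2 * c * u + d) :=
    fun u hu ↦ by have := hQ u hu; positivity
  rw [le_div_iff₀ (hden s hs), zero_mul] at h
  exact div_nonneg (by nlinarith) (hden s' hs').le

theorem phi_swap_faces (x1 x2 x3 x4 x5 x6 : ℝ) :
    phi x1 x2 x3 x4 x5 x6 = phi x1 x3 x2 x4 x6 x5 := by
  rw [phi, phi, mul_comm (√_)]
  ring_nf

theorem phi_swap_ends (x1 x2 x3 x4 x5 x6 : ℝ) :
    phi x1 x2 x3 x4 x5 x6 = phi x1 x6 x5 x4 x3 x2 := by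
  rw [phi, phi]
  ring_nf

theorem phi_antitone_x4 {x1 x2 x3 x5 x6 : ℝ} (h1 : 1 ≤ x1) :
    Antitone fun x4 ↦ phi x1 x2 x3 x4 x5 x6 := by
  intro a b hab
  exact div_le_div_of_nonneg_right
    (by nlinarith [mul_nonneg (sub_nonneg.2 (one_le_pow₀ (n := 2) h1)) (sub_nonneg.2 hab)])
    (by positivity)

theorem phi_le_max_of_mem_Icc₂ {x1 x3 x4 x5 x6 p q t : ℝ} (h1 : 1 ≤ x1) (h4 : 0 ≤ x4)
    (h5 : 0 ≤ x5) (h6 : 1 ≤ x6) (hp : 0 ≤ p) (ht : t ∈ Icc p q) :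
    phi x1 t x3 x4 x5 x6 ≤ max (phi x1 p x3 x4 x5 x6) (phi x1 q x3 x4 x5 x6) := by
  have hphi : ∀ u, phi x1 u x3 x4 x5 x6 =
      ((x3 + x1 * x5) * u + (x5 * x6 + x1 * x3 * x6 - x1 ^ 2 * x4 + x4)) /
        √(u ^ 2 + 2 * (x1 * x6) * u + (x1 ^ 2 + x6 ^ 2 - 1)) /
        √(2 * x1 * x3 * x5 + x1 ^ 2 + x3 ^ 2 + x5 ^ 2 - 1) := fun u ↦ by
    rw [phi, div_div]
    ring_nf
  rw [hphi, hphi, hphi, max_div_div_right (sqrt_nonneg _)]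
  refine div_le_div_of_nonneg_right (div_sqrt_quadratic_le_max ?_ (fun s hs ↦ ?_) ht)
    (sqrt_nonneg _)
  · have : 0 ≤ (x1 ^ 2 - 1) * (x5 * x6 + x4) := mul_nonneg (by nlinarith) (by nlinarith)
    linarith
  · have : 0 ≤ x1 * x6 * s := mul_nonneg (by nlinarith) (hp.trans hs.1)
    nlinarith

theorem phi_le_max_of_mem_Icc₃ {x1 x2 x4 x5 x6 p q t : ℝ} (h1 : 1 ≤ x1) (h4 : 0 ≤ x4)
    (h5 : 1 ≤ x5) (h6 : 0 ≤ x6) (hp : 0 ≤ p) (ht : t ∈ Icc p q) :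
    phi x1 x2 t x4 x5 x6 ≤ max (phi x1 x2 p x4 x5 x6) (phi x1 x2 q x4 x5 x6) := by
  rw [phi_swap_faces, phi_swap_faces x1 x2 p, phi_swap_faces x1 x2 q]
  exact phi_le_max_of_mem_Icc₂ h1 h4 h6 h5 hp ht

theorem phi_le_max_of_mem_Icc₆ {x1 x2 x3 x4 x5 p q t : ℝ} (h1 : 1 ≤ x1) (h2 : 1 ≤ x2)
    (h3 : 0 ≤ x3) (h4 : 0 ≤ x4) (hp : 0 ≤ p) (ht : t ∈ Icc p q) :
    phi x1 x2 x3 x4 x5 t ≤ max (phi x1 x2 x3 x4 x5 p) (phi x1 x2 x3 x4 x5 q) := by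
  rw [phi_swap_ends, phi_swap_ends x1 x2 x3 x4 x5 p, phi_swap_ends x1 x2 x3 x4 x5 q]
  exact phi_le_max_of_mem_Icc₂ h1 h4 h3 h2 hp ht

theorem phi_le_max_of_mem_Icc₅ {x1 x2 x3 x4 x6 p q t : ℝ} (h1 : 1 ≤ x1) (h2 : 0 ≤ x2)
    (h3 : 1 ≤ x3) (h4 : 0 ≤ x4) (hp : 0 ≤ p) (ht : t ∈ Icc p q) :
    phi x1 x2 x3 x4 t x6 ≤ max (phi x1 x2 x3 x4 p x6) (phi x1 x2 x3 x4 q x6) := by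
  rw [phi_swap_ends, phi_swap_ends x1 x2 x3 x4 p, phi_swap_ends x1 x2 x3 x4 q]
  exact phi_le_max_of_mem_Icc₃ h1 h4 h3 h2 hp ht

theorem phi_eq_div_of_sq {x1 x2 x3 x4 x5 x6 γ : ℝ}
    (hA : 0 ≤ 2 * x1 * x2 * x6 + x1 ^ 2 + x2 ^ 2 + x6 ^ 2 - 1) (hγ : 0 ≤ γ)
    (h : γ ^ 2 = (2 * x1 * x2 * x6 + x1 ^ 2 + x2 ^ 2 + x6 ^ 2 - 1) *
      (2 * x1 * x3 * x5 + x1 ^ 2 + x3 ^ 2 + x5 ^ 2 - 1)) :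
    phi x1 x2 x3 x4 x5 x6 =
      (x2 * x3 + x5 * x6 + x1 * x2 * x5 + x1 * x3 * x6 - x1 ^ 2 * x4 + x4) / γ := by
  rw [phi, ← sqrt_mul hA, ← h, sqrt_sq hγ]

section Vertices

/- A vertex of `[1, x]⁴` in `(x₂, x₃, x₅, x₆)` is named after the edges set to `x`: `e₂, e₆` bound
a face with `e₁`, `e₂, e₃` meet at an endpoint of `e₁`. -/

variable {x : ℝ}

theorem phi_ones_le (hx : 1 ≤ x) : phi x 1 1 1 1 1 ≤ phi x x x 1 x x := by
  rw [phi_eq_div_of_sq (γ := (x + 1) ^ 2) (by nlinarith) (by positivity) (by ring),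
    phi_eq_div_of_sq (γ := (x + 1) ^ 2 * (2 * x - 1)) (by nlinarith) (by nlinarith) (by ring),
    div_le_div_iff₀ (by positivity) (by nlinarith)]
  nlinarith [mul_nonneg (pow_nonneg (sq_nonneg (x + 1)) 2) (sq_nonneg (x - 1))]

theorem phi_single_le (hx : 1 ≤ x) : phi x x 1 1 1 1 ≤ phi x x 1 1 x 1 := by
  rw [phi_eq_div_of_sq (γ := 2 * x * (x + 1)) (by nlinarith) (by positivity) (by ring),
    phi_eq_div_of_sq (γ := 4 * x ^ 2) (by nlinarith) (by positivity) (by ring),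
    div_le_div_iff₀ (by positivity) (by positivity)]
  have hx0 : 0 ≤ x := by linarith
  have hx1 : 0 ≤ x + 1 := by linarith
  nlinarith [mul_nonneg (mul_nonneg hx0 (pow_nonneg hx1 3)) (sq_nonneg (x - 1))]

theorem phi_endpoint_pair_le (hx : 1 ≤ x) : phi x x x 1 1 1 ≤ phi x x 1 1 x 1 := by
  rw [phi_eq_div_of_sq (γ := 4 * x ^ 2) (by nlinarith) (by positivity) (by ring),
    phi_eq_div_of_sq (γ := 4 * x ^ 2) (by nlinarith) (by positivity) (by ring)]
  exact div_le_div_of_nonneg_right (by nlinarith [pow_nonneg (sub_nonneg.2 hx) 3]) (by positivity)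

theorem phi_face_pair_le (hx : 1 ≤ x) : phi x x 1 1 1 x ≤ phi x x 1 1 x 1 := by
  have hs : √(2 * x - 1) ^ 2 = 2 * x - 1 := sq_sqrt (by linarith)
  have hs0 : 0 < √(2 * x - 1) := sqrt_pos.2 (by linarith)
  have hP : 4 * x ^ 2 ≤ (x ^ 3 - x ^ 2 + 3 * x + 1) * √(2 * x - 1) := by
    refine le_of_pow_le_pow_left₀ two_ne_zero (mul_nonneg (by nlinarith) hs0.le) ?_
    rw [mul_pow _ √(2 * x - 1), hs]
    nlinarith [mul_nonneg (pow_nonneg (sub_nonneg.2 hx) 3)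
      (by positivity : (0:ℝ) ≤ 2 * x ^ 4 + x ^ 3 + 13 * x ^ 2 + 7 * x + 1)]
  rw [phi_eq_div_of_sq (γ := (x + 1) ^ 2 * √(2 * x - 1)) (by nlinarith) (by positivity)
      (by rw [mul_pow _ √(2 * x - 1), hs]; ring),
    phi_eq_div_of_sq (γ := 4 * x ^ 2) (by nlinarith) (by positivity) (by ring),
    div_le_div_iff₀ (by positivity) (by positivity)]
  nlinarith [mul_le_mul_of_nonneg_left hP (sq_nonneg (x + 1))]

end Vertices

theorem phi_vertex_le {x e2 e3 e5 e6 : ℝ} (hx : 1 ≤ x) (h2 : e2 = 1 ∨ e2 = x)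
    (h3 : e3 = 1 ∨ e3 = x) (h5 : e5 = 1 ∨ e5 = x) (h6 : e6 = 1 ∨ e6 = x) :
    phi x e2 e3 1 e5 e6 ≤ max (phi x x x 1 x x) (max (phi x x 1 1 x 1) (phi x x x 1 x 1)) := by
  set M := max (phi x x x 1 x x) (max (phi x x 1 1 x 1) (phi x x x 1 x 1))
  have hM1 : phi x x x 1 x x ≤ M := le_max_left _ _
  have hM2 : phi x x 1 1 x 1 ≤ M := (le_max_left _ _).trans (le_max_right _ _)
  have hM3 : phi x x x 1 x 1 ≤ M := (le_max_right _ _).trans (le_max_right _ _)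
  have hOnes := (phi_ones_le hx).trans hM1
  have hSingle := (phi_single_le hx).trans hM2
  have hEndpoint := (phi_endpoint_pair_le hx).trans hM2
  have hFace := (phi_face_pair_le hx).trans hM2
  rcases h2 with rfl | rfl <;> rcases h3 with rfl | rfl <;> rcases h5 with rfl | rfl <;>
    rcases h6 with rfl | rfl
  · exact hOnes
  · exact (phi_swap_ends _ _ _ _ _ _).trans_le hSingle
  · exact ((phi_swap_ends _ _ _ _ _ _).trans (phi_swap_faces _ _ _ _ _ _)).trans_le hSingle
  · exact (phi_swap_ends _ _ _ _ _ _).trans_le hEndpoint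
  · exact (phi_swap_faces _ _ _ _ _ _).trans_le hSingle
  · exact (phi_swap_faces _ _ _ _ _ _).trans_le hM2
  · exact (phi_swap_faces _ _ _ _ _ _).trans_le hFace
  · exact (phi_swap_ends _ _ _ _ _ _).trans_le hM3
  · exact hSingle
  · exact hFace
  · exact hM2
  · exact ((phi_swap_ends _ _ _ _ _ _).trans (phi_swap_faces _ _ _ _ _ _)).trans_le hM3
  · exact hEndpoint
  · exact (phi_swap_faces _ _ _ _ _ _).trans_le hM3
  · exact hM3
  · exact hM1

theorem phi_longest_edge_bound_general (x1 x2 x3 x4 x5 x6 : ℝ)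
    (h1 : 1 ≤ x1) (h2 : 1 ≤ x2) (h3 : 1 ≤ x3) (h4 : 1 ≤ x4) (h5 : 1 ≤ x5) (h6 : 1 ≤ x6)
    (h2m : x2 ≤ x1) (h3m : x3 ≤ x1) (h5m : x5 ≤ x1) (h6m : x6 ≤ x1) :
    phi x1 x2 x3 x4 x5 x6 ≤
      max (phi x1 x1 x1 1 x1 x1) (max (phi x1 x1 1 1 x1 1) (phi x1 x1 x1 1 x1 1)) := by
  refine (phi_antitone_x4 h1 h4).trans ?_
  refine (phi_le_max_of_mem_Icc₂ h1 zero_le_one (by linarith) h6 zero_le_one ⟨h2, h2m⟩).trans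
    (max_le ?_ ?_) <;>
  refine (phi_le_max_of_mem_Icc₃ h1 zero_le_one h5 (by linarith) zero_le_one ⟨h3, h3m⟩).trans
    (max_le ?_ ?_) <;>
  refine (phi_le_max_of_mem_Icc₅ h1 (by linarith) (by linarith) zero_le_one zero_le_one
    ⟨h5, h5m⟩).trans (max_le ?_ ?_) <;>
  refine (phi_le_max_of_mem_Icc₆ h1 (by linarith) (by linarith) zero_le_one zero_le_one
    ⟨h6, h6m⟩).trans (max_le ?_ ?_) <;>
  exact phi_vertex_le h1 (by simp) (by simp) (by simp) (by simp)

theorem phi_longest_edge_bound (x1 x2 x3 x4 x5 x6 : ℝ)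
    (h1 : 1 ≤ x1) (h2 : 1 ≤ x2) (h3 : 1 ≤ x3) (h4 : 1 ≤ x4) (h5 : 1 ≤ x5) (h6 : 1 ≤ x6)
    (h2m : x2 ≤ x1) (h3m : x3 ≤ x1) (h4m : x4 ≤ x1) (h5m : x5 ≤ x1) (h6m : x6 ≤ x1)
    (h1' : 1 < x1) :
    phi x1 x2 x3 x4 x5 x6 ≤
      max (phi x1 x1 x1 1 x1 x1) (max (phi x1 x1 1 1 x1 1) (phi x1 x1 x1 1 x1 1)) :=
  phi_longest_edge_bound_general x1 x2 x3 x4 x5 x6 h1 h2 h3 h4 h5 h6 h2m h3m h5m h6m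
end
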